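/- Let m ≥ 3 be odd, g(x) = Σ_{k=(m+1)/2}^{m} C(m,k) x^k (1−x)^{m−k}, and h(x) = g(1/2 + x) − 1/2 on [−1/2, 1/2]. Then there exists ε₀ > 0 such that for every ℓ ≥ 1 and every ε ∈ (0, ε₀): ε^{((m+1)/2)^ℓ} ≤ 1/2 − h^{(ℓ)}(1/2 − ε) ≤ (9ε)^{((m+1)/2)^ℓ}, where h^{(ℓ)} is the ℓ-fold composition of h. -/

import Mathlib

/-- The majority polynomial: probability that `Bin(m,x) ≥ (m+1)/2`. -/
noncomputable def majPoly (m : ℕ) (x : ℝ) : ℝ :=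
  ∑ k ∈ Finset.Icc ((m + 1) / 2) m, (m.choose k : ℝ) * x ^ k * (1 - x) ^ (m - k)

/-- `h(x) = g(1/2 + x) − 1/2`, the recentered majority polynomial. -/
noncomputable def majH (m : ℕ) (x : ℝ) : ℝ := majPoly m (1/2 + x) - 1/2

/-!
Write `m = 2t + 1` and `g = majPoly m`. The reflection `k ↦ m - k` exchanges the two halves of the
binomial expansion of `(x + (1 - x)) ^ m`, so `g (1 - x) = 1 - g x`; hence `x ↦ 1/2 - x` conjugates
`g` to `majH m`, and `1/2 - (majH m)^[ℓ] (1/2 - ε) = g^[ℓ] ε`. On `[0, 1/4]` the polynomial `g` is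
squeezed between two monomials: the middle term alone gives `x ^ (t+1) ≤ g x` because
`choose (2t+1) t ≥ 2 ^ t`, and bounding every term by its coefficient times `x ^ (t+1)` gives
`4 g x ≤ (4x) ^ (t+1)` because the upper half of the binomial coefficients sums to `4 ^ t`.
In particular `g` maps `[0, 1/4]` into itself, and both bounds iterate to
`ε ^ (t+1)^ℓ ≤ g^[ℓ] ε ≤ (4ε) ^ (t+1)^ℓ / 4`.
-/

open Finset Function

section Iteration

variable {R : Type*} [Semiring R] [PartialOrder R] [IsOrderedRing R]
  {f : R → R} {s : Set R} {d : ℕ}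

theorem pow_pow_le_iterate (hf : Set.MapsTo f s s) (hs : s ⊆ Set.Ici 0)
    (hle : ∀ x ∈ s, x ^ d ≤ f x) {x : R} (hx : x ∈ s) (n : ℕ) : x ^ d ^ n ≤ f^[n] x := by
  induction n with
  | zero => simp
  | succ n ih =>
    rw [pow_succ, pow_mul, iterate_succ_apply']
    exact (pow_le_pow_left₀ (pow_nonneg (hs hx) _) ih d).trans (hle _ (hf.iterate n hx))

theorem mul_iterate_le_pow_pow {c : R} (hc : 0 ≤ c) (hf : Set.MapsTo f s s) (hs : s ⊆ Set.Ici 0)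
    (hle : ∀ x ∈ s, c * f x ≤ (c * x) ^ d) {x : R} (hx : x ∈ s) (n : ℕ) :
    c * f^[n] x ≤ (c * x) ^ d ^ n := by
  induction n with
  | zero => simp
  | succ n ih =>
    rw [pow_succ, pow_mul, iterate_succ_apply']
    have hn := hf.iterate n hx
    exact (hle _ hn).trans (pow_le_pow_left₀ (mul_nonneg hc (hs hn)) ih d)

end Iteration

theorem Finset.sum_Icc_upper_half_reflect {M : Type*} [AddCommMonoid M] (t : ℕ) (f : ℕ → M) :
    ∑ k ∈ Icc (t + 1) (2 * t + 1), f k = ∑ k ∈ range (t + 1), f (2 * t + 1 - k) := by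
  rw [← Ico_add_one_right_eq_Icc, range_eq_Ico, sum_Ico_reflect f 0 (by omega)]
  congr 2; omega

theorem Nat.sum_Icc_choose_upper_half (t : ℕ) :
    ∑ k ∈ Icc (t + 1) (2 * t + 1), (2 * t + 1).choose k = 4 ^ t := by
  rw [sum_Icc_upper_half_reflect, ← sum_range_choose_halfway]
  exact sum_congr rfl fun k hk => choose_symm (by have := mem_range.1 hk; omega)

theorem Nat.two_pow_le_choose_middle (t : ℕ) : 2 ^ t ≤ (2 * t + 1).choose t := by
  have hmiddle : (2 * t + 1) / 2 = t := by omega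
  have hsum : 4 ^ t ≤ (t + 1) * (2 * t + 1).choose t := by
    calc 4 ^ t = ∑ k ∈ range (t + 1), (2 * t + 1).choose k := (sum_range_choose_halfway t).symm
      _ ≤ #(range (t + 1)) • (2 * t + 1).choose t :=
        sum_le_card_nsmul _ _ _ fun k _ => (choose_le_middle k _).trans_eq (by rw [hmiddle])
      _ = (t + 1) * (2 * t + 1).choose t := by rw [card_range, smul_eq_mul]
  refine Nat.le_of_mul_le_mul_left ?_ (Nat.two_pow_pos t)
  calc 2 ^ t * 2 ^ t = 4 ^ t := by rw [← mul_pow]; rfl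
    _ ≤ (t + 1) * (2 * t + 1).choose t := hsum
    _ ≤ 2 ^ t * (2 * t + 1).choose t := Nat.mul_le_mul_right _ Nat.lt_two_pow_self

theorem majPoly_nonneg (m : ℕ) {x : ℝ} (hx0 : 0 ≤ x) (hx1 : x ≤ 1) : 0 ≤ majPoly m x :=
  sum_nonneg fun k _ => by have := sub_nonneg.2 hx1; positivity

theorem majPoly_two_mul_add_one (t : ℕ) (x : ℝ) :
    majPoly (2 * t + 1) x = ∑ k ∈ Icc (t + 1) (2 * t + 1),
      ((2 * t + 1).choose k : ℝ) * x ^ k * (1 - x) ^ (2 * t + 1 - k) := by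
  rw [majPoly, show (2 * t + 1 + 1) / 2 = t + 1 by omega]

theorem majPoly_add_majPoly_one_sub (t : ℕ) (x : ℝ) :
    majPoly (2 * t + 1) x + majPoly (2 * t + 1) (1 - x) = 1 := by
  have hlower : majPoly (2 * t + 1) (1 - x) =
      ∑ k ∈ range (t + 1), ((2 * t + 1).choose k : ℝ) * x ^ k * (1 - x) ^ (2 * t + 1 - k) := by
    rw [majPoly_two_mul_add_one, sum_Icc_upper_half_reflect]
    refine sum_congr rfl fun k hk => ?_
    have hk : k ≤ 2 * t + 1 := by have := mem_range.1 hk; omega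
    rw [Nat.choose_symm hk, Nat.sub_sub_self hk, sub_sub_cancel]
    ring
  rw [hlower, majPoly_two_mul_add_one, add_comm, ← Ico_add_one_right_eq_Icc, sum_range_add_sum_Ico _ (by omega)]
  calc _ = (x + (1 - x)) ^ (2 * t + 1) := by rw [add_pow]; exact sum_congr rfl fun k _ => by ring
    _ = 1 := by simp

theorem majH_one_half_sub (t : ℕ) (x : ℝ) :
    majH (2 * t + 1) (1 / 2 - x) = 1 / 2 - majPoly (2 * t + 1) x := by
  have := majPoly_add_majPoly_one_sub t x
  rw [majH, show (1 / 2 : ℝ) + (1 / 2 - x) = 1 - x by ring]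
  linarith

theorem semiconj_majH (t : ℕ) :
    Semiconj (fun x : ℝ => 1 / 2 - x) (majPoly (2 * t + 1)) (majH (2 * t + 1)) :=
  fun x => (majH_one_half_sub t x).symm

theorem pow_le_majPoly (t : ℕ) {x : ℝ} (hx0 : 0 ≤ x) (hx : x ≤ 1 / 2) :
    x ^ (t + 1) ≤ majPoly (2 * t + 1) x := by
  have hcoef : 1 ≤ ((2 * t + 1).choose (t + 1) : ℝ) * (1 - x) ^ t :=
    calc (1 : ℝ) = 2 ^ t * (1 / 2) ^ t := by rw [← mul_pow]; norm_num
      _ ≤ ((2 * t + 1).choose (t + 1) : ℝ) * (1 - x) ^ t := by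
        gcongr
        · exact_mod_cast (Nat.two_pow_le_choose_middle t).trans_eq (Nat.choose_symm_half t).symm
        · linarith
  have hx1 : 0 ≤ 1 - x := by linarith
  rw [majPoly_two_mul_add_one]
  calc x ^ (t + 1) ≤ ((2 * t + 1).choose (t + 1) : ℝ) * (1 - x) ^ t * x ^ (t + 1) :=
        le_mul_of_one_le_left (by positivity) hcoef
    _ = ((2 * t + 1).choose (t + 1) : ℝ) * x ^ (t + 1) * (1 - x) ^ (2 * t + 1 - (t + 1)) := by
        rw [show 2 * t + 1 - (t + 1) = t by omega]; ring
    _ ≤ _ := single_le_sum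
        (f := fun k => ((2 * t + 1).choose k : ℝ) * x ^ k * (1 - x) ^ (2 * t + 1 - k))
        (fun k _ => by positivity) (by simp only [mem_Icc]; omega)

theorem four_mul_majPoly_le (t : ℕ) {x : ℝ} (hx0 : 0 ≤ x) (hx1 : x ≤ 1) :
    4 * majPoly (2 * t + 1) x ≤ (4 * x) ^ (t + 1) := by
  have hx1' : 0 ≤ 1 - x := sub_nonneg.2 hx1
  have hterm : ∀ k ∈ Icc (t + 1) (2 * t + 1),
      ((2 * t + 1).choose k : ℝ) * x ^ k * (1 - x) ^ (2 * t + 1 - k) ≤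
        ((2 * t + 1).choose k : ℝ) * x ^ (t + 1) := fun k hk => by
    rw [mem_Icc] at hk
    calc _ ≤ ((2 * t + 1).choose k : ℝ) * x ^ (t + 1) * 1 :=
          mul_le_mul (mul_le_mul_of_nonneg_left (pow_le_pow_of_le_one hx0 hx1 hk.1) (by positivity))
            (pow_le_one₀ hx1' (by linarith)) (by positivity) (by positivity)
      _ = _ := mul_one _
  rw [majPoly_two_mul_add_one]
  calc 4 * ∑ k ∈ Icc (t + 1) (2 * t + 1),
        ((2 * t + 1).choose k : ℝ) * x ^ k * (1 - x) ^ (2 * t + 1 - k)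
      ≤ 4 * ((∑ k ∈ Icc (t + 1) (2 * t + 1), (2 * t + 1).choose k : ℕ) * x ^ (t + 1)) := by
        rw [Nat.cast_sum, sum_mul]
        exact mul_le_mul_of_nonneg_left (sum_le_sum hterm) (by norm_num)
    _ = (4 * x) ^ (t + 1) := by rw [Nat.sum_Icc_choose_upper_half]; push_cast; ring

theorem mapsTo_majPoly (t : ℕ) :
    Set.MapsTo (majPoly (2 * t + 1)) (Set.Icc 0 (1 / 4)) (Set.Icc 0 (1 / 4)) := by
  rintro x ⟨hx0, hx⟩
  refine ⟨majPoly_nonneg _ hx0 (by linarith), ?_⟩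
  have := (four_mul_majPoly_le t hx0 (by linarith)).trans
    (pow_le_of_le_one (by positivity) (by linarith) t.succ_ne_zero)
  linarith

theorem majH_iterate_near_fixed_point_general (m : ℕ) (hm : Odd m) :
    ∃ ε₀ > (0:ℝ), ∀ ℓ : ℕ, 1 ≤ ℓ → ∀ ε : ℝ, ε ∈ Set.Ioo 0 ε₀ →
      ε ^ (((m + 1) / 2) ^ ℓ) ≤ 1/2 - (majH m)^[ℓ] (1/2 - ε) ∧
      1/2 - (majH m)^[ℓ] (1/2 - ε) ≤ (9 * ε) ^ (((m + 1) / 2) ^ ℓ) := by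
  obtain ⟨t, rfl⟩ := hm
  refine ⟨1 / 4, by norm_num, fun ℓ _ ε ⟨hε0, hε⟩ => ?_⟩
  have hs : Set.Icc (0 : ℝ) (1 / 4) ⊆ Set.Ici 0 := fun x hx => hx.1
  have hε' : ε ∈ Set.Icc (0 : ℝ) (1 / 4) := ⟨hε0.le, hε.le⟩
  rw [show (2 * t + 1 + 1) / 2 = t + 1 by omega, ← (semiconj_majH t).iterate_right ℓ ε,
    sub_sub_cancel]
  constructor
  · exact pow_pow_le_iterate (mapsTo_majPoly t) hs
      (fun x hx => pow_le_majPoly t hx.1 (by linarith [hx.2])) hε' ℓ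
  · have hle := mul_iterate_le_pow_pow (by norm_num) (mapsTo_majPoly t) hs
      (fun x hx => four_mul_majPoly_le t hx.1 (by linarith [hx.2])) hε' ℓ
    have hnonneg := (mapsTo_majPoly t).iterate ℓ hε'
    calc (majPoly (2 * t + 1))^[ℓ] ε ≤ 4 * (majPoly (2 * t + 1))^[ℓ] ε :=
          le_mul_of_one_le_left hnonneg.1 (by norm_num)
      _ ≤ (4 * ε) ^ (t + 1) ^ ℓ := hle
      _ ≤ (9 * ε) ^ (t + 1) ^ ℓ := by gcongr; norm_num

theorem majH_iterate_near_fixed_point (m : ℕ) (hm : Odd m) (hm3 : 3 ≤ m) :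
    ∃ ε₀ > (0:ℝ), ∀ ℓ : ℕ, 1 ≤ ℓ → ∀ ε : ℝ, ε ∈ Set.Ioo 0 ε₀ →
      ε ^ (((m + 1) / 2) ^ ℓ) ≤ 1/2 - (majH m)^[ℓ] (1/2 - ε) ∧
      1/2 - (majH m)^[ℓ] (1/2 - ε) ≤ (9 * ε) ^ (((m + 1) / 2) ^ ℓ) :=
  majH_iterate_near_fixed_point_general m hm
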